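/- arXiv:2003.13637 — 2 statements merged into one kernel-verified Lean document; each statement's English description precedes it below -/
import Mathlib

section
/- (Robbins–Siegmund Lemma) Let (Ω, F, P) be a probability space with a filtration (F_k)_{k∈ℕ}. Let (α_k)_{k∈ℕ} and (θ_k)_{k∈ℕ} be sequences of nonnegative random variables adapted to (F_k), each α_k integrable, and let (η_k)_{k∈ℕ} and (χ_k)_{k∈ℕ} be nonnegative real sequences with Σ_k η_k < ∞ and Σ_k χ_k < ∞. Suppose that for every k ∈ ℕ, E[α_{k+1} | F_k] + θ_k ≤ (1 + χ_k)·α_k + η_k almost surely. Then Σ_k θ_k < ∞ almost surely, and (α_k) converges almost surely to a nonnegative random variable. -/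
/-!
Put `c k = ∏_{j<k} (1 + χ j)`; it increases to a finite limit since `∑ χ < ∞`. Dividing the
recursion by `c (k+1) = c k (1 + χ k)` shows that
`X k = α k / c k + ∑_{j<k} θ j / c (j+1) + ∑_{j≥k} η j / c (j+1)`
is a nonnegative supermartingale, so it converges a.s. Along such a path the `η`-tail tends to `0`,
and since `α k / c k ≥ 0` the nondecreasing `θ`-sums stay bounded; hence they converge, and so does
`α k / c k`. Multiplying back by `c`, which is bounded by `exp (∑ χ)`, gives both claims.
-/

open MeasureTheory Filter Finset Topology

namespace MeasureTheory

theorem Supermartingale.exists_ae_tendsto_of_nonneg {Ω : Type*} {m0 : MeasurableSpace Ω}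
    {μ : Measure Ω} [IsFiniteMeasure μ] {ℱ : Filtration ℕ m0} {f : ℕ → Ω → ℝ}
    (hf : Supermartingale f ℱ μ) (hf_nonneg : ∀ n, 0 ≤ᵐ[μ] f n) :
    ∀ᵐ ω ∂μ, ∃ l, Tendsto (fun n => f n ω) atTop (𝓝 l) := by
  have hbdd (n : ℕ) : eLpNorm ((-f) n) 1 μ ≤ (∫ ω, f 0 ω ∂μ).toNNReal := by
    rw [Pi.neg_apply, eLpNorm_neg, eLpNorm_one_eq_lintegral_enorm,
      ← ofReal_integral_norm_eq_lintegral_enorm (hf.integrable n)]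
    refine ENNReal.ofReal_le_ofReal ?_
    calc ∫ ω, ‖f n ω‖ ∂μ = ∫ ω, f n ω ∂μ :=
          integral_congr_ae <| (hf_nonneg n).mono fun ω h => Real.norm_of_nonneg h
      _ ≤ ∫ ω, f 0 ω ∂μ := by
          simpa using hf.setIntegral_le (Nat.zero_le n) MeasurableSet.univ
  filter_upwards [hf.neg.exists_ae_tendsto_of_bdd hbdd] with ω ⟨l, hl⟩
  exact ⟨-l, by simpa using hl.neg⟩

theorem integrable_of_condExp_add_le {Ω : Type*} {m m0 : MeasurableSpace Ω} {μ : Measure Ω}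
    {f g h : Ω → ℝ} (hf : 0 ≤ᵐ[μ] f) (hg : 0 ≤ g) (hg_meas : AEStronglyMeasurable g μ)
    (hh : Integrable h μ) (hle : μ[f|m] + g ≤ᵐ[μ] h) : Integrable g μ := by
  refine hh.mono' hg_meas ?_
  filter_upwards [hle, condExp_nonneg hf] with ω hω hcond
  rw [Real.norm_of_nonneg (hg ω)]
  exact le_trans (le_add_of_nonneg_left hcond) hω

theorem condExp_div_const_add_of_stronglyMeasurable {Ω : Type*} {m m0 : MeasurableSpace Ω}
    {μ : Measure Ω} (hm : m ≤ m0) [SigmaFinite (μ.trim hm)] {f g : Ω → ℝ} (r : ℝ)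
    (hf : Integrable f μ) (hg : StronglyMeasurable[m] g) (hg_int : Integrable g μ) :
    μ[fun ω => f ω / r + g ω|m] =ᵐ[μ] fun ω => μ[f|m] ω / r + g ω := by
  have hdiv : (fun ω => f ω / r) = r⁻¹ • f := by ext ω; simp [div_eq_inv_mul]
  filter_upwards [condExp_add (hf.div_const r) hg_int m, condExp_smul (μ := μ) r⁻¹ f m]
    with ω hadd hsmul
  simp only [Pi.add_apply] at hadd
  rw [← hdiv] at hsmul
  change μ[(fun ω => f ω / r) + g|m] ω = _
  rw [hadd, hsmul, condExp_of_stronglyMeasurable hm hg hg_int]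
  simp [div_eq_inv_mul]

end MeasureTheory

theorem Monotone.exists_tendsto_of_tendsto_add {u v : ℕ → ℝ} {l : ℝ} (hv : Monotone v)
    (hu : ∀ n, 0 ≤ u n) (h : Tendsto (fun n => u n + v n) atTop (𝓝 l)) :
    ∃ t, Tendsto v atTop (𝓝 t) := by
  rcases tendsto_atTop_of_monotone hv with hv_top | hconv
  · refine absurd h (not_tendsto_nhds_of_tendsto_atTop ?_ l)
    exact tendsto_atTop_mono (fun n => le_add_of_nonneg_left (hu n)) hv_top
  · exact hconv

theorem Summable.tsum_nat_add_eq_add {G : Type*} [AddCommGroup G] [TopologicalSpace G]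
    [IsTopologicalAddGroup G] [T2Space G] {g : ℕ → G} (hg : Summable g) (k : ℕ) :
    ∑' j, g (j + k) = g k + ∑' j, g (j + (k + 1)) := by
  simpa [add_assoc, add_comm 1] using ((summable_nat_add_iff k).2 hg).tsum_eq_zero_add

noncomputable def discountFactor (χ : ℕ → ℝ) (k : ℕ) : ℝ := ∏ j ∈ range k, (1 + χ j)

section DiscountFactor

variable {χ : ℕ → ℝ}

theorem discountFactor_succ (χ : ℕ → ℝ) (k : ℕ) :
    discountFactor χ (k + 1) = discountFactor χ k * (1 + χ k) :=
  prod_range_succ _ _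

theorem one_le_discountFactor (hχ : ∀ k, 0 ≤ χ k) (k : ℕ) : 1 ≤ discountFactor χ k :=
  one_le_prod fun j _ => le_add_of_nonneg_right (hχ j)

theorem discountFactor_pos (hχ : ∀ k, 0 ≤ χ k) (k : ℕ) : 0 < discountFactor χ k :=
  zero_lt_one.trans_le (one_le_discountFactor hχ k)

theorem monotone_discountFactor (hχ : ∀ k, 0 ≤ χ k) : Monotone (discountFactor χ) :=
  monotone_nat_of_le_succ fun k => by
    rw [discountFactor_succ]
    exact le_mul_of_one_le_right (discountFactor_pos hχ k).le (le_add_of_nonneg_right (hχ k))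

theorem div_discountFactor_succ_le_of_le (hχ : ∀ k, 0 ≤ χ k) {k : ℕ} {x a b : ℝ}
    (h : x ≤ (1 + χ k) * a + b) :
    x / discountFactor χ (k + 1) ≤ a / discountFactor χ k + b / discountFactor χ (k + 1) :=
  calc _ ≤ ((1 + χ k) * a + b) / discountFactor χ (k + 1) := by
        gcongr; exact (discountFactor_pos hχ _).le
    _ = a / discountFactor χ k + b / discountFactor χ (k + 1) := by
        rw [discountFactor_succ]
        field_simp [(discountFactor_pos hχ k).ne', (by linarith [hχ k] : (1 : ℝ) + χ k ≠ 0)]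

theorem discountFactor_le_exp_tsum (hχ : ∀ k, 0 ≤ χ k) (hχ_sum : Summable χ) (k : ℕ) :
    discountFactor χ k ≤ Real.exp (∑' j, χ j) :=
  calc discountFactor χ k ≤ ∏ j ∈ range k, Real.exp (χ j) :=
        prod_le_prod (fun j _ => by linarith [hχ j]) fun j _ => by
          linarith [Real.add_one_le_exp (χ j)]
    _ = Real.exp (∑ j ∈ range k, χ j) := (Real.exp_sum _ _).symm
    _ ≤ Real.exp (∑' j, χ j) := Real.exp_le_exp.2 (hχ_sum.sum_le_tsum _ fun j _ => hχ j)

theorem exists_tendsto_discountFactor (hχ : ∀ k, 0 ≤ χ k) (hχ_sum : Summable χ) :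
    ∃ C, Tendsto (discountFactor χ) atTop (𝓝 C) :=
  ⟨_, tendsto_atTop_ciSup (monotone_discountFactor hχ)
    ⟨_, Set.forall_mem_range.2 (discountFactor_le_exp_tsum hχ hχ_sum)⟩⟩

end DiscountFactor

noncomputable def robbinsSiegmundProcess {Ω : Type*} (α θ : ℕ → Ω → ℝ) (η χ : ℕ → ℝ) (k : ℕ)
    (ω : Ω) : ℝ :=
  α k ω / discountFactor χ k + ∑ j ∈ range k, θ j ω / discountFactor χ (j + 1)
    + ∑' j, η (j + k) / discountFactor χ (j + k + 1)

section RobbinsSiegmundProcess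

variable {Ω : Type*} {α θ : ℕ → Ω → ℝ} {η χ : ℕ → ℝ}

theorem robbinsSiegmundProcess_nonneg (hα : ∀ k ω, 0 ≤ α k ω) (hθ : ∀ k ω, 0 ≤ θ k ω)
    (hη : ∀ k, 0 ≤ η k) (hχ : ∀ k, 0 ≤ χ k) (k : ℕ) (ω : Ω) :
    0 ≤ robbinsSiegmundProcess α θ η χ k ω := by
  have hc := discountFactor_pos hχ
  unfold robbinsSiegmundProcess
  have h₁ := div_nonneg (hα k ω) (hc k).le
  have h₂ := sum_nonneg fun j (_ : j ∈ range k) => div_nonneg (hθ j ω) (hc (j + 1)).le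
  have h₃ : 0 ≤ ∑' j, η (j + k) / discountFactor χ (j + k + 1) :=
    tsum_nonneg fun j => div_nonneg (hη (j + k)) (hc (j + k + 1)).le
  positivity

theorem summable_and_exists_tendsto_of_tendsto_robbinsSiegmundProcess {ω : Ω}
    (hα : ∀ k, 0 ≤ α k ω) (hθ : ∀ k, 0 ≤ θ k ω) (hχ : ∀ k, 0 ≤ χ k) (hχ_sum : Summable χ)
    (hX : ∃ l, Tendsto (fun k => robbinsSiegmundProcess α θ η χ k ω) atTop (𝓝 l)) :
    (Summable fun k => θ k ω) ∧ ∃ L, Tendsto (fun k => α k ω) atTop (𝓝 L) := by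
  obtain ⟨l, hl⟩ := hX
  obtain ⟨C, hC⟩ := exists_tendsto_discountFactor hχ hχ_sum
  set c := discountFactor χ
  have hc := discountFactor_pos hχ
  set S : ℕ → ℝ := fun n => ∑ j ∈ range n, θ j ω / c (j + 1)
  have hS_mono : Monotone S :=
    (sum_mono_set_of_nonneg fun j => div_nonneg (hθ j) (hc _).le).comp range_mono
  have hu : Tendsto (fun k => α k ω / c k + S k) atTop (𝓝 l) := by
    have h := hl.sub (tendsto_sum_nat_add fun j => η j / c (j + 1))
    rw [sub_zero] at h
    exact h.congr fun k => add_sub_cancel_right _ _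
  obtain ⟨s, hs⟩ :=
    hS_mono.exists_tendsto_of_tendsto_add (fun k => div_nonneg (hα k) (hc k).le) hu
  have hθ_disc : Summable fun j => θ j ω / c (j + 1) :=
    ((hasSum_iff_tendsto_nat_of_nonneg (fun j => div_nonneg (hθ j) (hc _).le) s).2 hs).summable
  refine ⟨(hθ_disc.mul_left (Real.exp (∑' j, χ j))).of_nonneg_of_le hθ fun j => ?_, ?_⟩
  · rw [← mul_div_assoc, le_div_iff₀ (hc _), mul_comm]
    exact mul_le_mul_of_nonneg_right (discountFactor_le_exp_tsum hχ hχ_sum _) (hθ j)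
  · have hα_disc : Tendsto (fun k => α k ω / c k) atTop (𝓝 (l - s)) :=
      (hu.sub hs).congr fun k => add_sub_cancel_right _ _
    exact ⟨C * (l - s), (hC.mul hα_disc).congr fun k => mul_div_cancel₀ _ (hc k).ne'⟩

variable [MeasurableSpace Ω] {P : Measure Ω} [IsFiniteMeasure P] {𝔽 : Filtration ℕ ‹_›}

theorem supermartingale_robbinsSiegmundProcess (hα_adapted : Adapted 𝔽 α)
    (hθ_adapted : Adapted 𝔽 θ) (hα_int : ∀ k, Integrable (α k) P)
    (hθ_int : ∀ k, Integrable (θ k) P) (hχ : ∀ k, 0 ≤ χ k) (hη_sum : Summable η)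
    (hrec : ∀ k, ∀ᵐ ω ∂P, (P[α (k + 1)|𝔽 k]) ω + θ k ω ≤ (1 + χ k) * α k ω + η k) :
    Supermartingale (robbinsSiegmundProcess α θ η χ) 𝔽 P := by
  set c := discountFactor χ
  have hc := discountFactor_pos hχ
  set S : ℕ → Ω → ℝ := fun n ω => ∑ j ∈ range n, θ j ω / c (j + 1)
  set T : ℕ → ℝ := fun k => ∑' j, η (j + k) / c (j + k + 1)
  have hη_disc : Summable fun j => η j / c (j + 1) :=
    hη_sum.abs.of_norm_bounded fun j => by
      rw [Real.norm_eq_abs, abs_div, abs_of_pos (hc _)]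
      exact div_le_self (abs_nonneg _) (one_le_discountFactor hχ _)
  have hT (k : ℕ) : T k = η k / c (k + 1) + T (k + 1) := hη_disc.tsum_nat_add_eq_add k
  have hS_meas (n k : ℕ) (hn : n ≤ k + 1) : StronglyMeasurable[𝔽 k] (S n) :=
    Finset.stronglyMeasurable_fun_sum _ fun j hj =>
      ((hθ_adapted j).div_const _).stronglyMeasurable.mono (𝔽.mono (by simp at hj; omega))
  have hS_int (n : ℕ) : Integrable (S n) P :=
    integrable_finsetSum _ fun j _ => (hθ_int j).div_const _
  refine supermartingale_nat (fun k => ?_) (fun k => ?_) (fun k => ?_)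
  · exact (((hα_adapted k).div_const _).stronglyMeasurable.add
      (hS_meas k k k.le_succ)).add stronglyMeasurable_const
  · exact (((hα_int k).div_const _).add (hS_int k)).add (integrable_const _)
  have hX : robbinsSiegmundProcess α θ η χ (k + 1) =
      fun ω => α (k + 1) ω / c (k + 1) + (S (k + 1) ω + T (k + 1)) := by
    ext ω; simp only [robbinsSiegmundProcess, add_assoc, S, T, c]
  rw [hX]
  filter_upwards [condExp_div_const_add_of_stronglyMeasurable (𝔽.le k) (c (k + 1))
    (g := fun ω => S (k + 1) ω + T (k + 1)) (hα_int (k + 1))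
    ((hS_meas (k + 1) k le_rfl).add stronglyMeasurable_const)
    ((hS_int (k + 1)).add (integrable_const _)), hrec k] with ω hcond hω
  rw [hcond]
  have key := div_discountFactor_succ_le_of_le hχ hω
  change _ ≤ α k ω / c k + S k ω + T k
  rw [hT k]
  simp only [S, sum_range_succ, add_div] at key ⊢
  linarith

end RobbinsSiegmundProcess

/-- Robbins–Siegmund Lemma: if nonnegative adapted integrable random
variables `α_k`, nonnegative adapted random variables `θ_k`, and nonnegative summable
real sequences `η_k`, `χ_k` satisfy
`E[α_{k+1} | F_k] + θ_k ≤ (1 + χ_k)·α_k + η_k` a.s. for every `k`, then `Σ_k θ_k < ∞`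
a.s. and `α_k` converges a.s. to a nonnegative random variable. -/
theorem robbins_siegmund
    {Ω : Type*} [MeasurableSpace Ω] {P : Measure Ω} [IsProbabilityMeasure P]
    (𝔽 : Filtration ℕ ‹MeasurableSpace Ω›)
    (α θ : ℕ → Ω → ℝ) (η χ : ℕ → ℝ)
    (hα_adapted : Adapted 𝔽 α) (hθ_adapted : Adapted 𝔽 θ)
    (hα_nonneg : ∀ k ω, 0 ≤ α k ω) (hθ_nonneg : ∀ k ω, 0 ≤ θ k ω)
    (hα_int : ∀ k, Integrable (α k) P)
    (hη_nonneg : ∀ k, 0 ≤ η k) (hχ_nonneg : ∀ k, 0 ≤ χ k)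
    (hη_sum : Summable η) (hχ_sum : Summable χ)
    (hrec : ∀ k, ∀ᵐ ω ∂P,
      (P[α (k + 1)|𝔽 k]) ω + θ k ω ≤ (1 + χ k) * α k ω + η k) :
    (∀ᵐ ω ∂P, Summable fun k => θ k ω) ∧
      ∃ A : Ω → ℝ, Measurable A ∧
        ∀ᵐ ω ∂P, 0 ≤ A ω ∧ Tendsto (fun k => α k ω) atTop (nhds (A ω)) := by
  have hθ_int (k : ℕ) : Integrable (θ k) P :=
    integrable_of_condExp_add_le (ae_of_all _ (hα_nonneg (k + 1))) (hθ_nonneg k)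
      ((hθ_adapted k).mono (𝔽.le k) le_rfl).aestronglyMeasurable
      (((hα_int k).const_mul _).add (integrable_const _)) (hrec k)
  have hX := supermartingale_robbinsSiegmundProcess hα_adapted hθ_adapted hα_int hθ_int
    hχ_nonneg hη_sum hrec
  have hpath : ∀ᵐ ω ∂P, (Summable fun k => θ k ω) ∧ ∃ L, Tendsto (fun k => α k ω) atTop (𝓝 L) :=
    (hX.exists_ae_tendsto_of_nonneg fun k => ae_of_all _ <|
      robbinsSiegmundProcess_nonneg hα_nonneg hθ_nonneg hη_nonneg hχ_nonneg k).mono fun ω =>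
        summable_and_exists_tendsto_of_tendsto_robbinsSiegmundProcess (hα_nonneg · ω)
          (hθ_nonneg · ω) hχ_nonneg hχ_sum
  obtain ⟨A, hA_meas, hA⟩ := measurable_limit_of_tendsto_metrizable_ae
    (fun k => ((hα_adapted k).mono (𝔽.le k) le_rfl).aemeasurable) (hpath.mono fun _ h => h.2)
  exact ⟨hpath.mono fun _ h => h.1, A, hA_meas,
    hA.mono fun ω hω => ⟨ge_of_tendsto' hω (hα_nonneg · ω), hω⟩⟩
end

section
/- (Deterministic relaxed forward–backward, Corollary 1) Let Ω ⊆ ℝ^n be a nonempty compact convex set and let F : ℝ^n → ℝ^n be monotone and ℓ-Lipschitz continuous on Ω for some ℓ > 0, and suppose the solution set of the variational inequality VI(Ω, F) is nonempty. Let δ ∈ [(√5 − 1)/2, 1) and λ ∈ (0, 1/(2δ(2ℓ+1))], and let (x^k), (x̄^k) be the sequences in Ω generated from any x^0 ∈ Ω, x̄^{−1} ∈ Ω by the deterministic relaxed forward–backward iteration: x̄^k = (1−δ)x^k + δx̄^{k−1} and x^{k+1} = proj_Ω(x̄^k − λ·F(x^k)). Then (x^k) converges to a point x* ∈ Ω solving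 the variational inequality, i.e., ⟨F(x*), y − x*⟩ ≥ 0 for all y ∈ Ω. -/
/-!
For every solution `z` of the variational inequality, the energy
`‖x̄^{k+1} - z‖² + (1 - δ) λ ℓ ‖x^{k+1} - x^k‖²` is nonincreasing, and its decrease dominates
`‖x^{k+1} - x̄^{k+1}‖² + ‖x^{k+2} - x^{k+1}‖²`: the projection inequalities at two consecutive
steps, monotonicity and the Lipschitz bound leave only cross terms, which have the right sign
exactly because `δ + δ² ≥ 1` (this is where `δ ≥ (√5 - 1)/2` enters) and `4δλℓ ≤ 1`.
Hence the residuals vanish, a cluster point `x*` (compactness) solves the variational inequality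
by passing to the limit in the projection inequality, and the energy centred at `x*`, being
monotone with a subsequence tending to `0`, tends to `0`.
-/

open Filter Topology
open scoped RealInnerProductSpace

theorem tendsto_zero_of_tendsto_norm_sq {E ι : Type*} [SeminormedAddCommGroup E] {l : Filter ι}
    {f : ι → E} (hf : Tendsto (fun i => ‖f i‖ ^ 2) l (𝓝 0)) : Tendsto f l (𝓝 0) := by
  rw [tendsto_zero_iff_norm_tendsto_zero]
  simpa using hf.sqrt

theorem tendsto_sub_succ_zero_of_antitone {V : ℕ → ℝ} (hV : Antitone V)
    (hbdd : BddBelow (Set.range V)) :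
    Tendsto (fun k => V k - V (k + 1)) atTop (𝓝 0) := by
  have h := tendsto_atTop_ciInf hV hbdd
  simpa using h.sub (h.comp (tendsto_add_atTop_nat 1))

variable {E : Type*} [NormedAddCommGroup E] [InnerProductSpace ℝ E]

theorem real_inner_sub_nonpos_of_forall_norm_sub_le {Ω : Set E} (hΩ : Convex ℝ Ω) {u p y : E}
    (hp : p ∈ Ω) (hmin : ∀ w ∈ Ω, ‖u - p‖ ≤ ‖u - w‖) (hy : y ∈ Ω) : ⟪u - p, y - p⟫ ≤ 0 := by
  have : Nonempty Ω := ⟨⟨p, hp⟩⟩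
  refine (norm_eq_iInf_iff_real_inner_le_zero hΩ hp).mp
    (le_antisymm (le_ciInf fun w => hmin w w.2) ?_) y hy
  exact ciInf_le ⟨0, fun _ ⟨_, h⟩ => h ▸ norm_nonneg _⟩ (⟨p, hp⟩ : Ω)

theorem two_mul_real_inner_sub_sub (a b c : E) :
    2 * ⟪a - b, a - c⟫ = ‖a - b‖ ^ 2 + ‖a - c‖ ^ 2 - ‖b - c‖ ^ 2 := by
  have h := norm_sub_sq_real (a - b) (a - c)
  rw [show a - b - (a - c) = c - b by abel, norm_sub_rev] at h
  linarith

theorem norm_one_sub_smul_add_smul_sq (t : ℝ) (a b : E) :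
    ‖(1 - t) • a + t • b‖ ^ 2 = (1 - t) * ‖a‖ ^ 2 + t * ‖b‖ ^ 2 - t * (1 - t) * ‖a - b‖ ^ 2 := by
  simp only [← real_inner_self_eq_norm_sq, inner_add_left, inner_add_right, inner_sub_left,
    inner_sub_right, real_inner_smul_left, real_inner_smul_right, real_inner_comm a b]
  ring

theorem real_inner_le_of_norm_le_mul {ℓ : ℝ} (hℓ : 0 ≤ ℓ) {u a : E} (hu : ‖u‖ ≤ ℓ * ‖a‖)
    (b : E) : ⟪u, b⟫ ≤ ℓ / 2 * (‖a‖ ^ 2 + ‖b‖ ^ 2) :=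
  calc ⟪u, b⟫ ≤ ‖u‖ * ‖b‖ := real_inner_le_norm u b
    _ ≤ ℓ * ‖a‖ * ‖b‖ := by gcongr
    _ ≤ ℓ / 2 * (‖a‖ ^ 2 + ‖b‖ ^ 2) := by
      nlinarith [mul_nonneg hℓ (sq_nonneg (‖a‖ - ‖b‖))]

def IsVISolution (Ω : Set E) (F : E → E) (z : E) : Prop :=
  z ∈ Ω ∧ ∀ y ∈ Ω, 0 ≤ ⟪F z, y - z⟫

theorem IsVISolution.inner_sub_nonneg {Ω : Set E} {F : E → E} {z y : E} (hz : IsVISolution Ω F z)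
    (hF : ∀ x ∈ Ω, ∀ y ∈ Ω, 0 ≤ ⟪F x - F y, x - y⟫) (hy : y ∈ Ω) : 0 ≤ ⟪F y, y - z⟫ := by
  have h := hF y hy z hz.1
  rw [inner_sub_left] at h
  have := hz.2 y hy
  linarith

/-- The forward–backward step `x (k+1) = proj_Ω (xb k - lam • F (x k))` is recorded through the
variational characterization of the projection onto a convex set. -/
structure IsRFBIterate (Ω : Set E) (F : E → E) (δ lam : ℝ) (x xb : ℕ → E) : Prop where
  mem : ∀ k, x k ∈ Ω
  relax : ∀ k, xb (k + 1) = (1 - δ) • x (k + 1) + δ • xb k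
  inner_le : ∀ k, ∀ y ∈ Ω, ⟪x (k + 1) - xb k, x (k + 1) - y⟫ ≤ lam * ⟪F (x k), y - x (k + 1)⟫

def rfbEnergy (δ lam ℓ : ℝ) (x xb : ℕ → E) (z : E) (k : ℕ) : ℝ :=
  ‖xb (k + 1) - z‖ ^ 2 + (1 - δ) * lam * ℓ * ‖x (k + 1) - x k‖ ^ 2

namespace IsRFBIterate

variable {Ω : Set E} {F : E → E} {δ lam ℓ : ℝ} {x xb : ℕ → E} {z : E}

theorem of_proj {proj : E → E} (hΩ : Convex ℝ Ω)
    (hproj : ∀ u, proj u ∈ Ω ∧ ∀ y ∈ Ω, ‖u - proj u‖ ≤ ‖u - y‖) (hx : ∀ k, x k ∈ Ω)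
    (hrel : ∀ k, xb (k + 1) = (1 - δ) • x (k + 1) + δ • xb k)
    (hfb : ∀ k, x (k + 1) = proj (xb k - lam • F (x k))) : IsRFBIterate Ω F δ lam x xb where
  mem := hx
  relax := hrel
  inner_le k y hy := by
    obtain ⟨hmem, hmin⟩ := hproj (xb k - lam • F (x k))
    have h := real_inner_sub_nonpos_of_forall_norm_sub_le hΩ hmem hmin hy
    rw [← hfb k] at h
    have e : ⟪xb k - lam • F (x k) - x (k + 1), y - x (k + 1)⟫ =
        ⟪x (k + 1) - xb k, x (k + 1) - y⟫ - lam * ⟪F (x k), y - x (k + 1)⟫ := by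
      rw [← neg_sub (x (k + 1)) y]
      simp only [inner_neg_right, inner_sub_left, real_inner_smul_left]
      ring
    linarith

theorem sub_relax (h : IsRFBIterate Ω F δ lam x xb) (k : ℕ) :
    x (k + 1) - xb (k + 1) = δ • (x (k + 1) - xb k) := by
  rw [h.relax k]
  module

theorem relax_inner_le (h : IsRFBIterate Ω F δ lam x xb) (hδ : 0 ≤ δ) (k : ℕ) {y : E}
    (hy : y ∈ Ω) :
    ⟪x (k + 1) - xb (k + 1), x (k + 1) - y⟫ ≤ δ * (lam * ⟪F (x k), y - x (k + 1)⟫) := by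
  rw [h.sub_relax k, real_inner_smul_left]
  exact mul_le_mul_of_nonneg_left (h.inner_le k y hy) hδ

theorem inner_sub_solution_le (h : IsRFBIterate Ω F δ lam x xb) (hlam : 0 ≤ lam)
    (hF : ∀ x ∈ Ω, ∀ y ∈ Ω, 0 ≤ ⟪F x - F y, x - y⟫) (hz : IsVISolution Ω F z) (k : ℕ) :
    ⟪x (k + 1) - xb k, x (k + 1) - z⟫ ≤ lam * ⟪F (x k), x k - x (k + 1)⟫ := by
  have hminty := mul_nonneg hlam (hz.inner_sub_nonneg hF (h.mem k))
  have e : ⟪F (x k), z - x (k + 1)⟫ = ⟪F (x k), x k - x (k + 1)⟫ - ⟪F (x k), x k - z⟫ := by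
    rw [← inner_sub_right, sub_sub_sub_cancel_left]
  have := h.inner_le k z hz.1
  rw [e] at this
  linarith

theorem descent_inner_le (h : IsRFBIterate Ω F δ lam x xb) (hδ : 0 ≤ δ) (hlam : 0 ≤ lam)
    (hℓ : 0 ≤ ℓ) (hF : ∀ x ∈ Ω, ∀ y ∈ Ω, 0 ≤ ⟪F x - F y, x - y⟫)
    (hL : ∀ x ∈ Ω, ∀ y ∈ Ω, ‖F x - F y‖ ≤ ℓ * ‖x - y‖) (hz : IsVISolution Ω F z) (k : ℕ) :
    δ * ⟪x (k + 2) - xb (k + 1), x (k + 2) - z⟫ + ⟪x (k + 1) - xb (k + 1), x (k + 1) - x (k + 2)⟫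
      ≤ δ * (lam * (ℓ / 2 * (‖x (k + 1) - x k‖ ^ 2 + ‖x (k + 2) - x (k + 1)‖ ^ 2))) := by
  have hcur := h.inner_sub_solution_le hlam hF hz (k + 1)
  have hprev := h.relax_inner_le hδ k (h.mem (k + 2))
  have hlip := real_inner_le_of_norm_le_mul hℓ (hL _ (h.mem (k + 1)) _ (h.mem k))
    (x (k + 1) - x (k + 2))
  rw [norm_sub_rev (x (k + 1)) (x (k + 2))] at hlip
  have hsplit : ⟪F (x (k + 1)), x (k + 1) - x (k + 2)⟫ =
      ⟪F (x (k + 1)) - F (x k), x (k + 1) - x (k + 2)⟫ + ⟪F (x k), x (k + 1) - x (k + 2)⟫ := by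
    rw [inner_sub_left]; ring
  have hflip : ⟪F (x k), x (k + 2) - x (k + 1)⟫ = -⟪F (x k), x (k + 1) - x (k + 2)⟫ := by
    rw [← inner_neg_right, neg_sub]
  rw [hsplit] at hcur
  rw [hflip] at hprev
  have := mul_le_mul_of_nonneg_left hcur hδ
  have := mul_le_mul_of_nonneg_left (mul_le_mul_of_nonneg_left hlip hlam) hδ
  linarith

theorem energy_descent (h : IsRFBIterate Ω F δ lam x xb) (hδ0 : 0 ≤ δ) (hδ1 : δ ≤ 1)
    (hδ : 1 ≤ δ + δ ^ 2) (hlam : 0 ≤ lam) (hℓ : 0 ≤ ℓ) (hstep : 4 * δ * lam * ℓ ≤ 1)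
    (hF : ∀ x ∈ Ω, ∀ y ∈ Ω, 0 ≤ ⟪F x - F y, x - y⟫)
    (hL : ∀ x ∈ Ω, ∀ y ∈ Ω, ‖F x - F y‖ ≤ ℓ * ‖x - y‖) (hz : IsVISolution Ω F z) (k : ℕ) :
    (1 - δ) * (2 * ‖x (k + 1) - xb (k + 1)‖ ^ 2 + ‖x (k + 2) - x (k + 1)‖ ^ 2) ≤
      2 * δ * (rfbEnergy δ lam ℓ x xb z k - rfbEnergy δ lam ℓ x xb z (k + 1)) := by
  have hinner := h.descent_inner_le hδ0 hlam hℓ hF hL hz k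
  have hfar := two_mul_real_inner_sub_sub (x (k + 2)) (xb (k + 1)) z
  have hnear := two_mul_real_inner_sub_sub (x (k + 1)) (xb (k + 1)) (x (k + 2))
  rw [norm_sub_rev (x (k + 1)) (x (k + 2)), norm_sub_rev (xb (k + 1)) (x (k + 2))] at hnear
  have hconv : ‖xb (k + 2) - z‖ ^ 2 = (1 - δ) * ‖x (k + 2) - z‖ ^ 2 + δ * ‖xb (k + 1) - z‖ ^ 2
      - δ * (1 - δ) * ‖x (k + 2) - xb (k + 1)‖ ^ 2 := by
    have hv : xb (k + 2) - z = (1 - δ) • (x (k + 2) - z) + δ • (xb (k + 1) - z) := by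
      rw [h.relax (k + 1)]; module
    rw [hv, norm_one_sub_smul_add_smul_sq, sub_sub_sub_cancel_right]
  have hR := mul_nonneg (mul_nonneg (sub_nonneg.2 hδ1) (sub_nonneg.2 hδ))
    (sq_nonneg ‖x (k + 2) - xb (k + 1)‖)
  have hB := mul_nonneg (mul_nonneg (sub_nonneg.2 hδ1) (sub_nonneg.2 hstep))
    (sq_nonneg ‖x (k + 2) - x (k + 1)‖)
  have hmain := mul_le_mul_of_nonneg_left hinner (sub_nonneg.2 hδ1)
  -- `2 (1 - δ) × hinner`, expanded by `hfar`, `hnear`, `hconv`, leaves exactly `2 hR + hB ≥ 0`.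
  unfold rfbEnergy
  nlinarith

theorem antitone_rfbEnergy (h : IsRFBIterate Ω F δ lam x xb) (hδ0 : 0 < δ) (hδ1 : δ ≤ 1)
    (hδ : 1 ≤ δ + δ ^ 2) (hlam : 0 ≤ lam) (hℓ : 0 ≤ ℓ) (hstep : 4 * δ * lam * ℓ ≤ 1)
    (hF : ∀ x ∈ Ω, ∀ y ∈ Ω, 0 ≤ ⟪F x - F y, x - y⟫)
    (hL : ∀ x ∈ Ω, ∀ y ∈ Ω, ‖F x - F y‖ ≤ ℓ * ‖x - y‖) (hz : IsVISolution Ω F z) :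
    Antitone (rfbEnergy δ lam ℓ x xb z) := by
  refine antitone_nat_of_succ_le fun k => ?_
  have := h.energy_descent hδ0.le hδ1 hδ hlam hℓ hstep hF hL hz k
  have : 0 ≤ (1 - δ) * (2 * ‖x (k + 1) - xb (k + 1)‖ ^ 2 + ‖x (k + 2) - x (k + 1)‖ ^ 2) := by
    have := sub_nonneg.2 hδ1; positivity
  nlinarith

theorem tendsto_residuals (h : IsRFBIterate Ω F δ lam x xb) (hδ0 : 0 < δ) (hδ1 : δ < 1)
    (hδ : 1 ≤ δ + δ ^ 2) (hlam : 0 ≤ lam) (hℓ : 0 ≤ ℓ) (hstep : 4 * δ * lam * ℓ ≤ 1)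
    (hF : ∀ x ∈ Ω, ∀ y ∈ Ω, 0 ≤ ⟪F x - F y, x - y⟫)
    (hL : ∀ x ∈ Ω, ∀ y ∈ Ω, ‖F x - F y‖ ≤ ℓ * ‖x - y‖) (hz : IsVISolution Ω F z) :
    Tendsto (fun k => x (k + 1) - xb (k + 1)) atTop (𝓝 0) ∧
      Tendsto (fun k => x (k + 1) - x k) atTop (𝓝 0) := by
  have hV := h.antitone_rfbEnergy hδ0 hδ1.le hδ hlam hℓ hstep hF hL hz
  have hD : 0 ≤ (1 - δ) * lam * ℓ := by have := sub_pos.2 hδ1; positivity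
  have hgap := (tendsto_sub_succ_zero_of_antitone hV
    ⟨0, Set.forall_mem_range.2 fun k => by unfold rfbEnergy; positivity⟩).const_mul
    (2 * δ / (1 - δ))
  rw [mul_zero] at hgap
  have hbound (k : ℕ) : 2 * ‖x (k + 1) - xb (k + 1)‖ ^ 2 + ‖x (k + 2) - x (k + 1)‖ ^ 2 ≤
      2 * δ / (1 - δ) * (rfbEnergy δ lam ℓ x xb z k - rfbEnergy δ lam ℓ x xb z (k + 1)) := by
    rw [div_mul_eq_mul_div, le_div_iff₀ (sub_pos.2 hδ1), mul_comm]
    exact h.energy_descent hδ0.le hδ1.le hδ hlam hℓ hstep hF hL hz k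
  constructor
  · refine tendsto_zero_of_tendsto_norm_sq (squeeze_zero (fun _ => sq_nonneg _) (fun k => ?_)
      (by simpa using hgap.div_const 2))
    have := sq_nonneg ‖x (k + 2) - x (k + 1)‖
    linarith [hbound k]
  · refine (tendsto_add_atTop_iff_nat 1).1 (tendsto_zero_of_tendsto_norm_sq
      (squeeze_zero (fun _ => sq_nonneg _) (fun k => ?_) hgap))
    have := sq_nonneg ‖x (k + 1) - xb (k + 1)‖
    linarith [hbound k]

theorem isVISolution_of_tendsto_subseq (h : IsRFBIterate Ω F δ lam x xb) (hlam : 0 < lam)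
    (hL : ∀ x ∈ Ω, ∀ y ∈ Ω, ‖F x - F y‖ ≤ ℓ * ‖x - y‖) {φ : ℕ → ℕ}
    (hφ : Tendsto φ atTop atTop) {xs : E} (hxs : xs ∈ Ω)
    (hx : Tendsto (fun j => x (φ j)) atTop (𝓝 xs))
    (hx' : Tendsto (fun j => x (φ j + 1)) atTop (𝓝 xs))
    (hres : Tendsto (fun k => x (k + 1) - xb k) atTop (𝓝 0)) : IsVISolution Ω F xs := by
  refine ⟨hxs, fun y hy => ?_⟩
  have hFx : Tendsto (fun j => F (x (φ j))) atTop (𝓝 (F xs)) := by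
    rw [tendsto_iff_norm_sub_tendsto_zero] at hx ⊢
    refine squeeze_zero (fun _ => norm_nonneg _) (fun j => hL _ (h.mem _) _ hxs) ?_
    simpa using hx.const_mul ℓ
  have hlim : Tendsto (fun j => lam * ⟪F (x (φ j)), y - x (φ j + 1)⟫ -
      ⟪x (φ j + 1) - xb (φ j), x (φ j + 1) - y⟫) atTop
      (𝓝 (lam * ⟪F xs, y - xs⟫ - ⟪(0 : E), xs - y⟫)) :=
    ((hFx.inner (tendsto_const_nhds.sub hx')).const_mul lam).sub
      ((hres.comp hφ).inner (hx'.sub tendsto_const_nhds))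
  have := ge_of_tendsto hlim (Eventually.of_forall fun j => sub_nonneg.2 (h.inner_le (φ j) y hy))
  rw [inner_zero_left, sub_zero] at this
  exact nonneg_of_mul_nonneg_right (by linarith) hlam

theorem exists_isVISolution_tendsto (h : IsRFBIterate Ω F δ lam x xb) (hΩ : IsCompact Ω)
    (hδ0 : 0 < δ) (hδ1 : δ < 1) (hδ : 1 ≤ δ + δ ^ 2) (hlam : 0 < lam) (hℓ : 0 ≤ ℓ)
    (hstep : 4 * δ * lam * ℓ ≤ 1) (hF : ∀ x ∈ Ω, ∀ y ∈ Ω, 0 ≤ ⟪F x - F y, x - y⟫)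
    (hL : ∀ x ∈ Ω, ∀ y ∈ Ω, ‖F x - F y‖ ≤ ℓ * ‖x - y‖) (hz : IsVISolution Ω F z) :
    ∃ xs, IsVISolution Ω F xs ∧ Tendsto x atTop (𝓝 xs) := by
  obtain ⟨hres, hdiff⟩ := h.tendsto_residuals hδ0 hδ1 hδ hlam.le hℓ hstep hF hL hz
  have hres' : Tendsto (fun k => x (k + 1) - xb k) atTop (𝓝 0) := by
    refine (by simpa using hres.const_smul δ⁻¹ : Tendsto _ _ (𝓝 (0 : E))).congr fun k => ?_
    rw [h.sub_relax k, smul_smul, inv_mul_cancel₀ hδ0.ne', one_smul]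
  obtain ⟨xs, hxs, φ, hφ, hxφ⟩ := hΩ.tendsto_subseq h.mem
  have hxφ' : Tendsto (fun j => x (φ j + 1)) atTop (𝓝 xs) := by
    simpa using hxφ.add (hdiff.comp hφ.tendsto_atTop)
  have hsol := h.isVISolution_of_tendsto_subseq hlam hL hφ.tendsto_atTop hxs hxφ hxφ' hres'
  refine ⟨xs, hsol, ?_⟩
  have hV := h.antitone_rfbEnergy hδ0 hδ1.le hδ hlam.le hℓ hstep hF hL hsol
  have hVφ : Tendsto (rfbEnergy δ lam ℓ x xb xs ∘ φ) atTop (𝓝 0) := by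
    have hxb : Tendsto (fun j => xb (φ j + 1) - xs) atTop (𝓝 0) := by
      simpa using (hxφ'.sub (hres.comp hφ.tendsto_atTop)).sub (tendsto_const_nhds (x := xs))
    simpa [Function.comp_def, rfbEnergy] using ((tendsto_norm_zero.comp hxb).pow 2).add
      (((tendsto_norm_zero.comp (hdiff.comp hφ.tendsto_atTop)).pow 2).const_mul
        ((1 - δ) * lam * ℓ))
  have hVlim := (tendsto_iff_tendsto_subseq_of_antitone hV hφ.tendsto_atTop).2 hVφ
  have hD : 0 ≤ (1 - δ) * lam * ℓ := by have := sub_pos.2 hδ1; positivity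
  have hxb : Tendsto (fun k => xb (k + 1) - xs) atTop (𝓝 0) :=
    tendsto_zero_of_tendsto_norm_sq (squeeze_zero (fun _ => sq_nonneg _)
      (fun k => by unfold rfbEnergy; nlinarith [sq_nonneg ‖x (k + 1) - x k‖]) hVlim)
  refine (tendsto_add_atTop_iff_nat 1).1 ?_
  simpa using (hres.add hxb).add_const xs

end IsRFBIterate

theorem deterministic_rfb_convergence_general {n : ℕ}
    (Ωset : Set (EuclideanSpace ℝ (Fin n)))
    (hcompact : IsCompact Ωset) (hconv : Convex ℝ Ωset)
    (F : EuclideanSpace ℝ (Fin n) → EuclideanSpace ℝ (Fin n))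
    (ℓ : ℝ) (hℓ : 0 < ℓ)
    (hFmono : ∀ x ∈ Ωset, ∀ y ∈ Ωset, 0 ≤ ⟪F x - F y, x - y⟫)
    (hFlip : ∀ x ∈ Ωset, ∀ y ∈ Ωset, ‖F x - F y‖ ≤ ℓ * ‖x - y‖)
    (hsol : ∃ z ∈ Ωset, ∀ y ∈ Ωset, 0 ≤ ⟪F z, y - z⟫)
    (δ : ℝ) (hδ : δ ∈ Set.Ico ((Real.sqrt 5 - 1) / 2) 1)
    (lam : ℝ) (hlam : lam ∈ Set.Ioc 0 (1 / (2 * δ * (2 * ℓ + 1))))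
    (proj : EuclideanSpace ℝ (Fin n) → EuclideanSpace ℝ (Fin n))
    (hproj : ∀ z, proj z ∈ Ωset ∧ ∀ y ∈ Ωset, ‖z - proj z‖ ≤ ‖z - y‖)
    (x xb : ℕ → EuclideanSpace ℝ (Fin n))
    (hxΩ : ∀ k, x k ∈ Ωset)
    (hrel : ∀ k, xb (k + 1) = (1 - δ) • x (k + 1) + δ • xb k)
    (hfb : ∀ k, x (k + 1) = proj (xb k - lam • F (x k))) :
    ∃ xstar ∈ Ωset,
      Tendsto x atTop (nhds xstar) ∧ ∀ y ∈ Ωset, 0 ≤ ⟪F xstar, y - xstar⟫ := by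
  obtain ⟨hδlow, hδ1⟩ := hδ
  obtain ⟨hlam0, hlamle⟩ := hlam
  obtain ⟨z, hz⟩ := hsol
  have hsqrt5 := Real.sq_sqrt (show (0 : ℝ) ≤ 5 by norm_num)
  have hδ0 : 0 < δ := by nlinarith [Real.sqrt_nonneg 5]
  have hgolden : 1 ≤ δ + δ ^ 2 := by nlinarith [Real.sqrt_nonneg 5]
  have hstep : 4 * δ * lam * ℓ ≤ 1 := by
    rw [le_div_iff₀ (by positivity)] at hlamle
    nlinarith
  obtain ⟨xstar, hxstar, hlim⟩ := (IsRFBIterate.of_proj hconv hproj hxΩ hrel hfb)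
    |>.exists_isVISolution_tendsto hcompact hδ0 hδ1 hgolden hlam0 hℓ.le hstep hFmono hFlip hz
  exact ⟨xstar, hxstar.1, hlim, hxstar.2⟩

/-- Deterministic relaxed forward–backward, Corollary 1: for a nonempty
compact convex set `Ω ⊆ ℝ^n`, a monotone `ℓ`-Lipschitz map `F` whose variational
inequality `VI(Ω,F)` admits a solution, relaxation `δ ∈ [(√5−1)/2, 1)` and step
`λ ∈ (0, 1/(2δ(2ℓ+1))]`, the deterministic relaxed forward–backward iteration
`x̄^k = (1−δ)x^k + δx̄^{k−1}`, `x^{k+1} = proj_Ω(x̄^k − λ·F(x^k))`, started from any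
`x^0 ∈ Ω`, `x̄^{−1} ∈ Ω`, produces a sequence `(x^k)` converging to a solution of the
variational inequality. -/
theorem deterministic_rfb_convergence {n : ℕ}
    (Ωset : Set (EuclideanSpace ℝ (Fin n)))
    (hne : Ωset.Nonempty) (hcompact : IsCompact Ωset) (hconv : Convex ℝ Ωset)
    (F : EuclideanSpace ℝ (Fin n) → EuclideanSpace ℝ (Fin n))
    (ℓ : ℝ) (hℓ : 0 < ℓ)
    (hFmono : ∀ x ∈ Ωset, ∀ y ∈ Ωset, 0 ≤ ⟪F x - F y, x - y⟫)
    (hFlip : ∀ x ∈ Ωset, ∀ y ∈ Ωset, ‖F x - F y‖ ≤ ℓ * ‖x - y‖)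
    (hsol : ∃ z ∈ Ωset, ∀ y ∈ Ωset, 0 ≤ ⟪F z, y - z⟫)
    (δ : ℝ) (hδ : δ ∈ Set.Ico ((Real.sqrt 5 - 1) / 2) 1)
    (lam : ℝ) (hlam : lam ∈ Set.Ioc 0 (1 / (2 * δ * (2 * ℓ + 1))))
    (proj : EuclideanSpace ℝ (Fin n) → EuclideanSpace ℝ (Fin n))
    (hproj : ∀ z, proj z ∈ Ωset ∧ ∀ y ∈ Ωset, ‖z - proj z‖ ≤ ‖z - y‖)
    (x xb : ℕ → EuclideanSpace ℝ (Fin n)) (xbinit : EuclideanSpace ℝ (Fin n))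
    (hx0 : x 0 ∈ Ωset) (hxbinit : xbinit ∈ Ωset)
    (hxΩ : ∀ k, x k ∈ Ωset) (hxbΩ : ∀ k, xb k ∈ Ωset)
    (hrel0 : xb 0 = (1 - δ) • x 0 + δ • xbinit)
    (hrel : ∀ k, xb (k + 1) = (1 - δ) • x (k + 1) + δ • xb k)
    (hfb : ∀ k, x (k + 1) = proj (xb k - lam • F (x k))) :
    ∃ xstar ∈ Ωset,
      Tendsto x atTop (nhds xstar) ∧ ∀ y ∈ Ωset, 0 ≤ ⟪F xstar, y - xstar⟫ :=
  deterministic_rfb_convergence_general Ωset hcompact hconv F ℓ hℓ hFmono hFlip hsol δ hδ lam hlam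
    proj hproj x xb hxΩ hrel hfb
end
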